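/- arXiv:2011.10573 — 8 statements merged into one kernel-verified Lean document; each statement's English description precedes it below -/
import Mathlib

section
/- Let a, b ∈ ℝ³. Then (1/2)‖a‖²‖b‖² ≤ ‖dev sym(Anti(a) × b)‖² ≤ (2/3)‖a‖²‖b‖². (In fact the proof shows ‖dev sym(Anti(a) × b)‖² = (1/2)‖a‖²‖b‖² + (1/6)⟨a,b⟩².) -/
open Matrix MeasureTheory

noncomputable section

abbrev M3 := Matrix (Fin 3) (Fin 3) ℝ
abbrev V3 := Fin 3 → ℝ

def sym3 (X : M3) : M3 := (1/2 : ℝ) • (X + Xᵀ)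
def dev3 (X : M3) : M3 := X - ((1/3 : ℝ) * Matrix.trace X) • (1 : M3)
def Anti3 (a : V3) : M3 := !![0, -a 2, a 1; a 2, 0, -a 0; -a 1, a 0, 0]
def frobSq (X : M3) : ℝ := ∑ i, ∑ j, (X i j)^2
def frobNorm (X : M3) : ℝ := Real.sqrt (frobSq X)
def vnormSq (a : V3) : ℝ := ∑ i, (a i)^2

def pd (k : Fin 3) (f : V3 → ℝ) (x : V3) : ℝ := fderiv ℝ f x (Pi.single k 1)

def Curl3 (P : V3 → M3) (x : V3) : M3 :=
  Matrix.of fun i j =>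
    ![pd 1 (fun y => P y i 2) x - pd 2 (fun y => P y i 1) x,
      pd 2 (fun y => P y i 0) x - pd 0 (fun y => P y i 2) x,
      pd 0 (fun y => P y i 1) x - pd 1 (fun y => P y i 0) x] j

def Jac3 (u : V3 → V3) (x : V3) : M3 :=
  Matrix.of fun i j => pd j (fun y => u y i) x

def lpM (q : ℝ) (Q : V3 → M3) : ℝ := (∫ x : V3, frobNorm (Q x) ^ q) ^ (1/q)
def lpV (q : ℝ) (a : V3 → V3) : ℝ := (∫ x : V3, Real.sqrt (vnormSq (a x)) ^ q) ^ (1/q)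

/-! Since `Anti a * Anti b = b aᵀ - ⟨a, b⟩ 𝟙`, the identity part is removed by `dev`, and
`dev sym (b aᵀ) = sym (b aᵀ) - ⅓ ⟨a, b⟩ 𝟙`. Its squared norm is
`‖sym (b aᵀ)‖² - ⅓ ⟨a, b⟩² = ½ (‖a‖² ‖b‖² + ⟨a, b⟩²) - ⅓ ⟨a, b⟩²`, and Cauchy–Schwarz
`0 ≤ ⟨a, b⟩² ≤ ‖a‖² ‖b‖²` gives both bounds. -/

theorem Anti3_mul_Anti3 (a b : V3) : Anti3 a * Anti3 b = vecMulVec b a - (a ⬝ᵥ b) • 1 := by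
  ext i j
  fin_cases i <;> fin_cases j <;>
    simp [Anti3, vecMulVec, dotProduct, mul_apply, Fin.sum_univ_three] <;> ring

theorem sym3_sub_smul_one (X : M3) (c : ℝ) : sym3 (X - c • 1) = sym3 X - c • 1 := by
  simp only [sym3, transpose_sub, transpose_smul, transpose_one]
  module

theorem trace_sym3 (X : M3) : trace (sym3 X) = trace X := by
  simp only [sym3, trace_smul, trace_add, trace_transpose, smul_eq_mul]
  ring

theorem dev3_sub_smul_one (X : M3) (c : ℝ) : dev3 (X - c • 1) = dev3 X := by
  simp only [dev3, trace_sub, trace_smul, trace_one, Fintype.card_fin, smul_eq_mul]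
  push_cast
  module

theorem frobSq_dev3 (X : M3) : frobSq (dev3 X) = frobSq X - trace X ^ 2 / 3 := by
  simp only [frobSq, dev3, trace, diag, Matrix.sub_apply, Matrix.smul_apply, one_apply,
    Fin.sum_univ_three, smul_eq_mul]
  simp only [Fin.isValue, ↓reduceIte, Fin.reduceEq, mul_one, mul_zero, sub_zero]
  ring

theorem frobSq_sym3_vecMulVec (a b : V3) :
    frobSq (sym3 (vecMulVec b a)) = (vnormSq a * vnormSq b + (a ⬝ᵥ b) ^ 2) / 2 := by
  simp only [frobSq, sym3, vnormSq, dotProduct, vecMulVec_apply, Matrix.smul_apply,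
    Matrix.add_apply, transpose_apply, Fin.sum_univ_three, smul_eq_mul]
  ring

theorem frobSq_dev3_sym3_Anti3_mul (a b : V3) :
    frobSq (dev3 (sym3 (Anti3 a * Anti3 b))) = vnormSq a * vnormSq b / 2 + (a ⬝ᵥ b) ^ 2 / 6 := by
  rw [Anti3_mul_Anti3, sym3_sub_smul_one, dev3_sub_smul_one, frobSq_dev3, trace_sym3,
    trace_vecMulVec, frobSq_sym3_vecMulVec, dotProduct_comm b a]
  ring

theorem sq_dotProduct_le_vnormSq_mul (a b : V3) : (a ⬝ᵥ b) ^ 2 ≤ vnormSq a * vnormSq b :=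
  Finset.sum_mul_sq_le_sq_mul_sq _ a b

/-- For a, b ∈ ℝ³,
(1/2)‖a‖²‖b‖² ≤ ‖dev sym(Anti(a) × b)‖² ≤ (2/3)‖a‖²‖b‖²,
where P × b := P · Anti(b) and ‖·‖ is the Frobenius norm. -/
theorem stmt0 (a b : V3) :
    (1/2) * vnormSq a * vnormSq b ≤ frobSq (dev3 (sym3 (Anti3 a * Anti3 b))) ∧
    frobSq (dev3 (sym3 (Anti3 a * Anti3 b))) ≤ (2/3) * vnormSq a * vnormSq b := by
  rw [frobSq_dev3_sym3_Anti3_mul]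
  have h_cauchySchwarz := sq_dotProduct_le_vnormSq_mul a b
  constructor <;> nlinarith [sq_nonneg (a ⬝ᵥ b)]
end
end

section
/- Let P ∈ ℝ^{3×3} and b ∈ ℝ³. Then ‖dev sym(P × b)‖ ≤ ‖sym(P × b)‖ ≤ (1 + √3)·‖dev sym(P × b)‖. -/
open Matrix MeasureTheory

noncomputable section

lemma sym3_apply (X : M3) (i j : Fin 3) : sym3 X i j = (X i j + X j i)/2 := by
  simp [sym3, Matrix.smul_apply, Matrix.add_apply, Matrix.transpose_apply]; ring

lemma frobSq_nonneg (X : M3) : 0 ≤ frobSq X :=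
  Finset.sum_nonneg fun i _ => Finset.sum_nonneg fun j _ => sq_nonneg _

lemma dev_frobSq (X : M3) : frobSq (dev3 X) = frobSq X - (Matrix.trace X)^2/3 := by
  simp [frobSq, dev3, Matrix.trace, Matrix.diag, Fin.sum_univ_three, Matrix.sub_apply,
    Matrix.smul_apply, Matrix.one_apply]
  ring

lemma key_ineq (P : M3) (b : V3) (hb : b ≠ 0) :
    (Matrix.trace (P * Anti3 b))^2 ≤ 2 * frobSq (sym3 (P * Anti3 b)) := by
  set B := vnormSq b with hB
  have hBpos : 0 < B := by
    rcases Function.ne_iff.1 hb with ⟨i, hi⟩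
    have : (b i)^2 ≤ B := by
      rw [hB, vnormSq]
      exact Finset.single_le_sum (fun j _ => sq_nonneg (b j)) (Finset.mem_univ i)
    have h0 : 0 < (b i)^2 := lt_of_le_of_ne (sq_nonneg _) (Ne.symm (pow_ne_zero 2 hi))
    linarith
  have CS := Finset.sum_mul_sq_le_sq_mul_sq (Finset.univ : Finset (Fin 3 × Fin 3))
    (fun p => sym3 (P * Anti3 b) p.1 p.2)
    (fun p => B * (if p.1 = p.2 then (1:ℝ) else 0) - b p.1 * b p.2)
  have h1 : (∑ p : Fin 3 × Fin 3, sym3 (P * Anti3 b) p.1 p.2 *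
      (B * (if p.1 = p.2 then (1:ℝ) else 0) - b p.1 * b p.2))
      = Matrix.trace (P * Anti3 b) * B := by
    simp [sym3_apply, Matrix.trace, Matrix.diag, Matrix.mul_apply, Anti3, hB, vnormSq,
      Fintype.sum_prod_type, Fin.sum_univ_three,
      Matrix.cons_val_zero, Matrix.cons_val_one, Matrix.head_cons,
      Matrix.cons_val_two, Matrix.tail_cons]
    ring
  have h2 : (∑ p : Fin 3 × Fin 3, (sym3 (P * Anti3 b) p.1 p.2)^2)
      = frobSq (sym3 (P * Anti3 b)) := by
    simp [frobSq, Fintype.sum_prod_type]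
  have h3 : (∑ p : Fin 3 × Fin 3, (B * (if p.1 = p.2 then (1:ℝ) else 0) - b p.1 * b p.2)^2)
      = 2 * B^2 := by
    simp [hB, vnormSq, Fintype.sum_prod_type, Fin.sum_univ_three]
    ring
  rw [h1, h2, h3] at CS
  have := sq_nonneg (Matrix.trace (P * Anti3 b))
  have hB2 : 0 < B^2 := by positivity
  nlinarith [CS]

/-- For P ∈ ℝ^{3×3}, b ∈ ℝ³:
‖dev sym(P × b)‖ ≤ ‖sym(P × b)‖ ≤ (1 + √3)·‖dev sym(P × b)‖. -/
theorem stmt2 (P : M3) (b : V3) :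
    frobNorm (dev3 (sym3 (P * Anti3 b))) ≤ frobNorm (sym3 (P * Anti3 b)) ∧
    frobNorm (sym3 (P * Anti3 b)) ≤ (1 + Real.sqrt 3) * frobNorm (dev3 (sym3 (P * Anti3 b))) := by
  by_cases hb : b = 0
  · subst hb
    have hA : Anti3 (0 : V3) = 0 := by
      ext i j; fin_cases i <;> fin_cases j <;> simp [Anti3, Matrix.vecHead, Matrix.vecTail]
    have hz : frobNorm (0 : M3) = 0 := by simp [frobNorm, frobSq]
    have hs : sym3 (0 : M3) = 0 := by simp [sym3]
    have hd : dev3 (0 : M3) = 0 := by simp [dev3]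
    rw [hA, mul_zero, hs, hd, hz]
    constructor
    · exact le_refl 0
    · have : 0 ≤ Real.sqrt 3 := Real.sqrt_nonneg 3
      nlinarith
  · set S := sym3 (P * Anti3 b) with hS
    have htr : Matrix.trace S = Matrix.trace (P * Anti3 b) := by
      simp [hS, Matrix.trace, Matrix.diag, sym3_apply, Fin.sum_univ_three]
    have hdev : frobSq (dev3 S) = frobSq S - (Matrix.trace (P * Anti3 b))^2/3 := by
      rw [dev_frobSq, htr]
    have hkey := key_ineq P b hb
    have hSfrob : frobSq S ≤ 3 * frobSq (dev3 S) := by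
      rw [hdev]; nlinarith [hkey]
    have hD0 : 0 ≤ frobSq (dev3 S) := frobSq_nonneg _
    constructor
    · apply Real.sqrt_le_sqrt
      rw [hdev]; nlinarith [sq_nonneg (Matrix.trace (P * Anti3 b))]
    · have h1 : frobNorm S ≤ Real.sqrt 3 * frobNorm (dev3 S) := by
        rw [frobNorm, frobNorm, ← Real.sqrt_mul (by norm_num : (0:ℝ) ≤ 3)]
        exact Real.sqrt_le_sqrt hSfrob
      have h2 : 0 ≤ frobNorm (dev3 S) := Real.sqrt_nonneg _
      nlinarith [h1, h2]
end
end

section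
/- Let P ∈ ℝ^{3×3} and b ∈ ℝ³. Then dev sym(P × b) = 0 if and only if sym(P × b) = 0. -/
open Matrix MeasureTheory

noncomputable section

set_option maxHeartbeats 1000000 in
/-- For P ∈ ℝ^{3×3}, b ∈ ℝ³:
dev sym(P × b) = 0 iff sym(P × b) = 0. -/
theorem stmt3 (P : M3) (b : V3) :
    dev3 (sym3 (P * Anti3 b)) = 0 ↔ sym3 (P * Anti3 b) = 0 := by
  constructor
  · intro h
    have h' : ∀ i j, dev3 (sym3 (P * Anti3 b)) i j = 0 := fun i j => by rw [h]; rfl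
    have h00 := h' 0 0
    have h11 := h' 1 1
    have h22 := h' 2 2
    have h01 := h' 0 1
    have h02 := h' 0 2
    have h12 := h' 1 2
    simp [dev3, sym3, Anti3, Matrix.mul_apply, Matrix.trace, Matrix.diag,
      Fin.sum_univ_three, Matrix.one_apply, Matrix.transpose_apply, Matrix.vecHead,
      Matrix.vecTail, Matrix.cons_val_zero, Matrix.cons_val_one, Matrix.head_cons,
      Matrix.cons_val_fin_one, Function.comp] at h00 h11 h22 h01 h02 h12
    clear h h'
    by_cases hb : b = 0
    · subst hb
      have hA : Anti3 (0 : V3) = 0 := by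
        ext i j
        fin_cases i <;> fin_cases j <;>
          simp [Anti3, Matrix.vecHead, Matrix.vecTail, Pi.zero_apply]
      simp [hA, sym3]
    · have hpos : 0 < b 0 ^ 2 + b 1 ^ 2 + b 2 ^ 2 := by
        by_contra hc
        push_neg at hc
        have h0 := sq_nonneg (b 0); have h1 := sq_nonneg (b 1); have h2 := sq_nonneg (b 2)
        apply hb
        funext i
        have e0 : b 0 = 0 := by
          have : b 0 ^ 2 = 0 := by nlinarith
          exact sq_eq_zero_iff.mp this
        have e1 : b 1 = 0 := by
          have : b 1 ^ 2 = 0 := by nlinarith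
          exact sq_eq_zero_iff.mp this
        have e2 : b 2 = 0 := by
          have : b 2 ^ 2 = 0 := by nlinarith
          exact sq_eq_zero_iff.mp this
        fin_cases i
        exacts [e0, e1, e2]
      have htb : ((b 2 * P 0 1 - b 1 * P 0 2) + (-(b 2 * P 1 0) + b 0 * P 1 2)
          + (b 1 * P 2 0 - b 0 * P 2 1)) * (b 0 ^ 2 + b 1 ^ 2 + b 2 ^ 2) = 0 := by
        linear_combination (-3 * b 0 ^ 2) * h00 + (-3 * b 1 ^ 2) * h11 + (-3 * b 2 ^ 2) * h22
          + (-6 * b 0 * b 1) * h01 + (-6 * b 0 * b 2) * h02 + (-6 * b 1 * b 2) * h12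
      have ht : (b 2 * P 0 1 - b 1 * P 0 2) + (-(b 2 * P 1 0) + b 0 * P 1 2)
          + (b 1 * P 2 0 - b 0 * P 2 1) = 0 :=
        (mul_eq_zero.mp htb).resolve_right hpos.ne'
      ext i j
      fin_cases i <;> fin_cases j <;>
        simp [dev3, sym3, Anti3, Matrix.mul_apply, Fin.sum_univ_three, Matrix.transpose_apply,
          Matrix.vecHead, Matrix.vecTail, Matrix.cons_val_zero, Matrix.cons_val_one,
          Matrix.head_cons, Function.comp] <;>
        first
          | linear_combination 2 * h00 + (2/3) * ht
          | linear_combination 2 * h11 + (2/3) * ht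
          | linear_combination 2 * h22 + (2/3) * ht
          | linear_combination 2 * h01
          | linear_combination 2 * h02
          | linear_combination 2 * h12
  · intro h
    rw [dev3, h]
    simp
end
end

section
/- Nye's formula: let Ω ⊆ ℝ³ be open and let a : Ω → ℝ³ be differentiable. Then Curl(Anti(a)) = (div a)·𝟙 − (Da)ᵀ on Ω, where Anti(a) denotes the skew-symmetric matrix field x ↦ Anti(a(x)). Equivalently, for a differentiable skew-symmetric matrix field A : Ω → so(3), D(axl A) = (1/2)tr(Curl A)·𝟙 − (Curl A)ᵀ. -/
open Matrix MeasureTheory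

noncomputable section

/-- Nye's formula: if Ω ⊆ ℝ³ is open and a : Ω → ℝ³ is
differentiable, then Curl(Anti(a)) = (div a)·𝟙 − (Da)ᵀ on Ω. -/
theorem stmt4 (Ω : Set V3) (hΩ : IsOpen Ω) (a : V3 → V3)
    (ha : ∀ x ∈ Ω, DifferentiableAt ℝ a x) :
    ∀ x ∈ Ω, Curl3 (fun y => Anti3 (a y)) x
      = Matrix.trace (Jac3 a x) • (1 : M3) - (Jac3 a x)ᵀ := by
  intro x hx
  have hd : ∀ i : Fin 3, DifferentiableAt ℝ (fun y => a y i) x :=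
    fun i => (differentiableAt_pi.mp (ha x hx)) i
  ext i j
  fin_cases i <;> fin_cases j <;>
    simp [Curl3, Anti3, Jac3, pd, Matrix.trace, Matrix.one_apply, fderiv_neg,
      Fin.sum_univ_three, Matrix.of_apply] <;> ring
end
end

section
/- Let Ω ⊆ ℝ³ be an open connected set and let A : Ω → ℝ^{3×3} be a continuously differentiable field of skew-symmetric matrices. Then sym(Curl A) = 0 everywhere on Ω if and only if there exist a constant skew-symmetric matrix Ã ∈ so(3) and a constant vector b ∈ ℝ³ such that A(x) = Anti(Ã·x + b) for all x ∈ Ω. -/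
/-!
Write `A = Anti a` with `a` the axial vector of `A`. Then `Curl (Anti a) = (div a) 1 - (∇a)ᵀ`,
so `sym Curl A = 0` forces `div a = 0` (take the trace) and then `∇a ∈ so(3)`. A field with
skew-symmetric derivative is an infinitesimal rigid motion: along a segment,
`⟨a x - a y, x - y⟩` has derivative `⟨∇a (x - y), x - y⟩ = 0`, and differentiating the resulting
identity `⟨a z - a y, z - y⟩ = 0` in `z` at `x` gives `a x - a y = ∇a(x) (x - y)`. Hence `a` is
affine on every ball, so `∇a` is locally constant, hence constant on the connected set `Ω`,
and `a` is affine on `Ω`.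
-/

open Matrix MeasureTheory

noncomputable section

attribute [local instance] Matrix.frobeniusNormedAddCommGroup Matrix.frobeniusNormedSpace

open Filter Topology

section SkewDerivative

variable {ι : Type*} [Fintype ι]

theorem HasDerivAt.dotProduct {u v : ℝ → ι → ℝ} {u' v' : ι → ℝ} {t : ℝ}
    (hu : HasDerivAt u u' t) (hv : HasDerivAt v v' t) :
    HasDerivAt (fun s => u s ⬝ᵥ v s) (u' ⬝ᵥ v t + u t ⬝ᵥ v') t := by
  simp only [_root_.dotProduct, ← Finset.sum_add_distrib]
  exact HasDerivAt.fun_sum fun i _ => (hasDerivAt_pi.1 hu i).mul (hasDerivAt_pi.1 hv i)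

theorem LinearMap.apply_dotProduct_eq_neg {L : (ι → ℝ) →ₗ[ℝ] ι → ℝ}
    (hL : ∀ h, L h ⬝ᵥ h = 0) (h k : ι → ℝ) : L h ⬝ᵥ k = -(L k ⬝ᵥ h) := by
  have := hL (h + k)
  simp only [map_add, add_dotProduct, dotProduct_add, hL] at this
  linarith

variable {a : (ι → ℝ) → ι → ℝ} {s : Set (ι → ℝ)}

theorem Convex.sub_dotProduct_sub_eq_zero_of_fderiv_skew (hs : Convex ℝ s)
    (hd : ∀ z ∈ s, DifferentiableAt ℝ a z)
    (hskew : ∀ z ∈ s, ∀ h, fderiv ℝ a z h ⬝ᵥ h = 0)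
    {x y : ι → ℝ} (hx : x ∈ s) (hy : y ∈ s) : (a x - a y) ⬝ᵥ (x - y) = 0 := by
  set g : ℝ → ℝ := fun t => a (y + t • (x - y)) ⬝ᵥ (x - y)
  have hg : ∀ t ∈ Set.Icc (0 : ℝ) 1, HasDerivAt g 0 t := fun t ht => by
    have hmem : y + t • (x - y) ∈ s := by
      simpa [AffineMap.lineMap_apply_module', add_comm] using hs.lineMap_mem hy hx ht
    have hline : HasDerivAt (fun t : ℝ => y + t • (x - y)) (x - y) t := by
      simpa using ((hasDerivAt_id t).smul_const (x - y)).const_add y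
    exact ((hd _ hmem).hasFDerivAt.comp_hasDerivAt t hline).dotProduct
      (hasDerivAt_const t (x - y)) |>.congr_deriv
      (by rw [hskew _ hmem, dotProduct_zero, add_zero])
  have hconst := constant_of_has_deriv_right_zero
    (fun t ht => (hg t ht).continuousAt.continuousWithinAt)
    (fun t ht => (hg t (Set.Ico_subset_Icc_self ht)).hasDerivWithinAt) 1 (by simp)
  simp only [g, one_smul, zero_smul, add_zero, add_sub_cancel] at hconst
  rw [sub_dotProduct, hconst, sub_self]

theorem Convex.eq_add_fderiv_sub_of_fderiv_skew (hs : Convex ℝ s) (hso : IsOpen s)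
    (hd : ∀ z ∈ s, DifferentiableAt ℝ a z)
    (hskew : ∀ z ∈ s, ∀ h, fderiv ℝ a z h ⬝ᵥ h = 0)
    {x y : ι → ℝ} (hx : x ∈ s) (hy : y ∈ s) : a y = a x + fderiv ℝ a x (y - x) := by
  set D := fderiv ℝ a x
  have horth : ∀ h, (a x - a y - D (x - y)) ⬝ᵥ h = 0 := fun h => by
    set ψ : ℝ → ℝ := fun t => (a (x + t • h) - a y) ⬝ᵥ (x + t • h - y)
    have hline : HasDerivAt (fun t : ℝ => x + t • h) h 0 := by
      simpa using ((hasDerivAt_id (0 : ℝ)).smul_const h).const_add x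
    have hψ : HasDerivAt ψ (D h ⬝ᵥ (x - y) + (a x - a y) ⬝ᵥ h) 0 :=
      (((hd x hx).hasFDerivAt.comp_hasDerivAt_of_eq (0 : ℝ) hline (by simp)).sub_const
        (a y)).dotProduct (hline.sub_const y) |>.congr_deriv (by simp [D])
    have hψ0 : ψ =ᶠ[𝓝 0] fun _ => 0 := by
      have hmem : ∀ᶠ t in 𝓝 (0 : ℝ), x + t • h ∈ s :=
        hline.continuousAt.preimage_mem_nhds (by simpa using hso.mem_nhds hx)
      filter_upwards [hmem] with t ht
      exact hs.sub_dotProduct_sub_eq_zero_of_fderiv_skew hd hskew ht hy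
    have hψ' := hψ.unique ((hasDerivAt_const (0 : ℝ) (0 : ℝ)).congr_of_eventuallyEq hψ0)
    have hD : D h ⬝ᵥ (x - y) = -(D (x - y) ⬝ᵥ h) :=
      LinearMap.apply_dotProduct_eq_neg (L := (D : (ι → ℝ) →ₗ[ℝ] ι → ℝ)) (hskew x hx) h
        (x - y)
    rw [sub_dotProduct]
    linarith
  have hzero := dotProduct_self_eq_zero.1 (horth _)
  rw [← neg_sub x y, map_neg]
  linear_combination -hzero

theorem IsOpen.eqOn_add_fderiv_sub_of_fderiv_skew (hso : IsOpen s) (hsc : IsPreconnected s)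
    (hd : DifferentiableOn ℝ a s) (hskew : ∀ z ∈ s, ∀ h, fderiv ℝ a z h ⬝ᵥ h = 0)
    {x₀ : ι → ℝ} (hx₀ : x₀ ∈ s) :
    s.EqOn a (fun x => a x₀ + fderiv ℝ a x₀ (x - x₀)) := by
  have hdiff : ∀ z ∈ s, DifferentiableAt ℝ a z := fun z hz =>
    hd.differentiableAt (hso.mem_nhds hz)
  have hloc : ∀ z ∈ s, fderiv ℝ a =ᶠ[𝓝 z] fun _ => fderiv ℝ a z := fun z hz => by
    obtain ⟨ε, hε, hball⟩ := Metric.isOpen_iff.1 hso z hz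
    have haff : a =ᶠ[𝓝 z] fun y => (a z - fderiv ℝ a z z) + fderiv ℝ a z y := by
      filter_upwards [Metric.ball_mem_nhds z hε] with y hy
      rw [(convex_ball z ε).eq_add_fderiv_sub_of_fderiv_skew Metric.isOpen_ball
        (fun w hw => hdiff w (hball hw)) (fun w hw => hskew w (hball hw))
        (Metric.mem_ball_self hε) hy, map_sub]
      abel
    filter_upwards [haff.eventuallyEq_nhds] with y hy
    exact hy.fderiv_eq.trans ((fderiv ℝ a z).hasFDerivAt.const_add _).fderiv
  have hconst : ∀ x ∈ s, fderiv ℝ a x = fderiv ℝ a x₀ := fun x hx =>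
    hso.is_const_of_fderiv_eq_zero (𝕜 := ℝ) hsc
      (fun z hz =>
        ((differentiableAt_const _).congr_of_eventuallyEq (hloc z hz)).differentiableWithinAt)
      (fun z hz => (hloc z hz).fderiv_eq.trans (fderiv_const_apply _)) hx hx₀
  have haff (x) : HasFDerivAt (fun x => a x₀ + fderiv ℝ a x₀ (x - x₀)) (fderiv ℝ a x₀) x := by
    simpa using
      ((fderiv ℝ a x₀).hasFDerivAt.comp x (hasFDerivAt_sub_const x₀)).const_add (a x₀)
  exact hso.eqOn_of_fderiv_eq hsc hd (fun x _ => (haff x).differentiableAt.differentiableWithinAt)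
    (fun x hx => (hconst x hx).trans (haff x).fderiv.symm) hx₀ (by simp)

end SkewDerivative

theorem Matrix.mulVec_dotProduct_self_eq_zero {ι : Type*} [Fintype ι] {M : Matrix ι ι ℝ}
    (hM : Mᵀ = -M) (h : ι → ℝ) : M *ᵥ h ⬝ᵥ h = 0 := by
  have hneg : M *ᵥ h ⬝ᵥ h = -(M *ᵥ h ⬝ᵥ h) := by
    conv_lhs =>
      rw [dotProduct_comm, dotProduct_mulVec, ← mulVec_transpose, hM, neg_mulVec, neg_dotProduct]
  linarith

def axl3 : M3 →L[ℝ] V3 :=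
  LinearMap.toContinuousLinearMap <| LinearMap.pi
    ![entryLinearMap ℝ ℝ 2 1, entryLinearMap ℝ ℝ 0 2, entryLinearMap ℝ ℝ 1 0]

theorem Anti3_axl3 {X : M3} (hX : Xᵀ = -X) : Anti3 (axl3 X) = X := by
  have hX' : ∀ i j, X j i = -X i j := fun i j => congrFun (congrFun hX i) j
  ext i j
  fin_cases i <;> fin_cases j <;> simp [Anti3, axl3] <;>
    linarith [hX' 0 0, hX' 1 1, hX' 2 2, hX' 0 1, hX' 0 2, hX' 1 2]

theorem Curl3_congr_of_eventuallyEq {P Q : V3 → M3} {x : V3} (h : P =ᶠ[𝓝 x] Q) :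
    Curl3 P x = Curl3 Q x := by
  have hpd : ∀ k i j, pd k (fun y => P y i j) x = pd k (fun y => Q y i j) x := fun k i j => by
    have hij : (fun y => P y i j) =ᶠ[𝓝 x] fun y => Q y i j :=
      h.mono fun y hy => congrFun (congrFun hy i) j
    rw [pd, pd, hij.fderiv_eq]
  ext i j
  simp only [Curl3, Matrix.of_apply, hpd]

theorem Curl3_Anti3 (a : V3 → V3) (x : V3) :
    Curl3 (fun y => Anti3 (a y)) x = trace (Jac3 a x) • 1 - (Jac3 a x)ᵀ := by
  ext i j
  fin_cases i <;> fin_cases j <;>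
    simp [Curl3, Jac3, Anti3, pd, trace, Fin.sum_univ_three, fderiv_fun_neg] <;> ring

theorem sym3_trace_smul_one_sub_transpose_eq_zero_iff (X : M3) :
    sym3 (trace X • 1 - Xᵀ) = 0 ↔ Xᵀ = -X := by
  have hsym : ∀ Y : M3, sym3 Y = 0 ↔ Yᵀ = -Y := fun Y => by
    rw [sym3, smul_eq_zero, add_eq_zero_iff_eq_neg', eq_comm]
    norm_num
  rw [hsym, transpose_sub, transpose_transpose, transpose_smul, transpose_one]
  constructor
  · intro h
    have htr : trace X = 0 := by
      have := congrArg trace h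
      simp only [trace_sub, trace_smul, trace_one, Fintype.card_fin, Nat.cast_ofNat, smul_eq_mul,
        neg_sub, trace_transpose] at this
      linarith
    rw [htr, zero_smul, zero_sub, zero_sub, neg_neg] at h
    exact h.symm
  · intro h
    have htr : trace X = 0 := by
      have := congrArg trace h
      rw [trace_transpose, trace_neg] at this
      linarith
    simp [htr, h]

theorem Jac3_eq_toMatrix' {a : V3 → V3} {x : V3} (ha : DifferentiableAt ℝ a x) :
    Jac3 a x = LinearMap.toMatrix' (fderiv ℝ a x : V3 →ₗ[ℝ] V3) := by
  ext i j
  simp [Jac3, pd, LinearMap.toMatrix'_apply, fderiv_apply ha]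

theorem Jac3_mulVec_add (M : M3) (b x : V3) : Jac3 (fun y => M *ᵥ y + b) x = M := by
  have hM : HasFDerivAt (fun y => M *ᵥ y + b) (LinearMap.toContinuousLinearMap M.mulVecLin) x :=
    (LinearMap.toContinuousLinearMap M.mulVecLin).hasFDerivAt.add_const b
  rw [Jac3_eq_toMatrix' hM.differentiableAt, hM.fderiv]
  exact LinearMap.toMatrix'_toLin' M

theorem sym3_Curl3_Anti3_eq_zero_iff (a : V3 → V3) (x : V3) :
    sym3 (Curl3 (fun y => Anti3 (a y)) x) = 0 ↔ (Jac3 a x)ᵀ = -Jac3 a x := by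
  rw [Curl3_Anti3, sym3_trace_smul_one_sub_transpose_eq_zero_iff]

/-- for Ω ⊆ ℝ³ open connected and A : Ω → so(3) of class C¹,
sym(Curl A) ≡ 0 on Ω iff A(x) = Anti(Ã·x + b) on Ω for some constant
Ã ∈ so(3) and b ∈ ℝ³. -/
theorem stmt5 (Ω : Set V3) (hΩo : IsOpen Ω) (hΩc : IsConnected Ω)
    (A : V3 → M3) (hA : ContDiffOn ℝ 1 A Ω) (hskew : ∀ x ∈ Ω, (A x)ᵀ = -(A x)) :
    (∀ x ∈ Ω, sym3 (Curl3 A x) = 0) ↔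
      ∃ (Atil : M3) (b : V3), Atilᵀ = -Atil ∧
        ∀ x ∈ Ω, A x = Anti3 (Atil.mulVec x + b) := by
  set a : V3 → V3 := fun x => axl3 (A x)
  have hAa : ∀ x ∈ Ω, A x = Anti3 (a x) := fun x hx => (Anti3_axl3 (hskew x hx)).symm
  have hda : DifferentiableOn ℝ a Ω :=
    axl3.differentiable.comp_differentiableOn (hA.differentiableOn one_ne_zero)
  constructor
  · intro hsym
    have hJ : ∀ x ∈ Ω, (Jac3 a x)ᵀ = -Jac3 a x := fun x hx => by
      rw [← sym3_Curl3_Anti3_eq_zero_iff,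
        ← Curl3_congr_of_eventuallyEq (eventually_of_mem (hΩo.mem_nhds hx) hAa)]
      exact hsym x hx
    have hdaAt : ∀ x ∈ Ω, DifferentiableAt ℝ a x := fun x hx =>
      hda.differentiableAt (hΩo.mem_nhds hx)
    have hskewD : ∀ x ∈ Ω, ∀ h, fderiv ℝ a x h ⬝ᵥ h = 0 := fun x hx h => by
      simpa [Jac3_eq_toMatrix' (hdaAt x hx)] using
        Matrix.mulVec_dotProduct_self_eq_zero (hJ x hx) h
    obtain ⟨x₀, hx₀⟩ := hΩc.nonempty
    refine ⟨Jac3 a x₀, a x₀ - Jac3 a x₀ *ᵥ x₀, hJ x₀ hx₀, fun x hx => ?_⟩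
    rw [hAa x hx, hΩo.eqOn_add_fderiv_sub_of_fderiv_skew hΩc.isPreconnected hda hskewD hx₀ hx,
      Jac3_eq_toMatrix' (hdaAt x₀ hx₀)]
    simp only [LinearMap.toMatrix'_mulVec, ContinuousLinearMap.coe_coe, map_sub]
    congr 1
    abel
  · rintro ⟨M, b, hM, hrep⟩ x hx
    rw [Curl3_congr_of_eventuallyEq (eventually_of_mem (hΩo.mem_nhds hx) hrep),
      sym3_Curl3_Anti3_eq_zero_iff, Jac3_mulVec_add]
    exact hM
end
end

section
/- Let Ω ⊆ ℝ³ be open and let P : ℝ³ → ℝ^{3×3} be a smooth (C∞) matrix field with compact support contained in Ω. If sym P = 0 everywhere and dev sym(Curl P) = 0 everywhere, then P ≡ 0. -/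
open Matrix MeasureTheory

noncomputable section

attribute [local instance] Matrix.frobeniusNormedAddCommGroup Matrix.frobeniusNormedSpace

theorem st7_pdc {f : V3 → ℝ} (hf : ContDiff ℝ (⊤ : ℕ∞) f) (k : Fin 3) :
    ContDiff ℝ (⊤ : ℕ∞) (pd k f) :=
  (hf.fderiv_right (by simp)).clm_apply contDiff_const

theorem st7_pdh {f : V3 → ℝ} (hf : HasCompactSupport f) (k : Fin 3) :
    HasCompactSupport (pd k f) := by
  have h1 : HasCompactSupport (fderiv ℝ f) := hf.fderiv (𝕜 := ℝ)
  have : pd k f = (fun L : V3 →L[ℝ] ℝ => L (Pi.single k 1)) ∘ (fderiv ℝ f) := rfl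
  rw [this]
  exact h1.comp_left (by simp)

theorem st7_pdNv (k : Fin 3) (f : V3 → ℝ) (x : V3) :
    pd k (fun y => -(f y)) x = -(pd k f x) := by
  unfold pd; rw [fderiv_fun_neg]; simp

theorem st7_pdN (k : Fin 3) (f : V3 → ℝ) :
    pd k (fun y => -(f y)) = fun x => -(pd k f x) :=
  funext fun x => st7_pdNv k f x

theorem st7_pdZv (k : Fin 3) (x : V3) :
    pd k (fun _ : V3 => (0:ℝ)) x = 0 := by
  unfold pd; rw [fderiv_fun_const]; simp

theorem st7_pdZ (k : Fin 3) :
    pd k (fun _ : V3 => (0:ℝ)) = fun _ => 0 :=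
  funext fun x => st7_pdZv k x

theorem st7_pdC {f : V3 → ℝ} (hf : ContDiff ℝ (⊤ : ℕ∞) f) (i j : Fin 3) :
    pd i (pd j f) = pd j (pd i f) := by
  funext x
  have hd : Differentiable ℝ (fderiv ℝ f) :=
    (hf.fderiv_right (m := (⊤ : ℕ∞)) (by simp)).differentiable (by simp)
  have key : ∀ (v w : V3),
      fderiv ℝ (fun y => fderiv ℝ f y v) x w = fderiv ℝ (fderiv ℝ f) x w v := by
    intro v w
    rw [fderiv_clm_apply (hd x) (differentiableAt_const v)]
    simp
  have sym := (hf.contDiffAt (x := x) |>.isSymmSndFDerivAt (by rw [minSmoothness_of_isRCLikeNormedField]; exact WithTop.coe_le_coe.mpr (le_top : (2 : ℕ∞) ≤ ⊤)))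
      (Pi.single i 1) (Pi.single j 1)
  unfold pd
  rw [key, key]
  exact sym

theorem st7_ez {f : V3 → ℝ} (hf : ContDiff ℝ (⊤ : ℕ∞) f) (hc : HasCompactSupport f)
    (h : ∀ k x, pd k f x = 0) : f = fun _ => 0 := by
  have hfd : ∀ x, fderiv ℝ f x = 0 := by
    intro x
    ext v
    have hv : (∑ i, v i • (Pi.single i 1 : V3)) = v := by
      ext j; simp [Pi.single_apply]
    rw [← hv, map_sum]
    have hz : ∀ i : Fin 3, fderiv ℝ f x (Pi.single i 1) = 0 := fun i => h i x
    simp only [ContinuousLinearMap.map_smul]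
    simp [hz]
  have hnc : (tsupport f) ≠ Set.univ := by
    intro he
    have : IsCompact (Set.univ : Set V3) := he ▸ hc
    exact (not_compactSpace_iff.mpr inferInstance) (isCompact_univ_iff.mp this)
  obtain ⟨y, hy⟩ := Set.ne_univ_iff_exists_notMem _ |>.1 hnc
  funext x
  have := is_const_of_fderiv_eq_zero (hf.differentiable (by simp)) hfd x y
  rw [this, image_eq_zero_of_notMem_tsupport hy]

theorem st7_key (a0 a1 a2 : V3 → ℝ)
    (s0 : ContDiff ℝ (⊤ : ℕ∞) a0) (s1 : ContDiff ℝ (⊤ : ℕ∞) a1) (s2 : ContDiff ℝ (⊤ : ℕ∞) a2)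
    (c0 : HasCompactSupport a0) (c1 : HasCompactSupport a1) (c2 : HasCompactSupport a2)
    (e01 : ∀ x, pd 0 a1 x = -(pd 1 a0 x))
    (e02 : ∀ x, pd 0 a2 x = -(pd 2 a0 x))
    (e12 : ∀ x, pd 1 a2 x = -(pd 2 a1 x))
    (d01 : ∀ x, pd 0 a0 x = pd 1 a1 x)
    (d12 : ∀ x, pd 1 a1 x = pd 2 a2 x) :
    (∀ x, a0 x = 0) ∧ (∀ x, a1 x = 0) ∧ (∀ x, a2 x = 0) := by
  have F01 : pd 0 a1 = fun x => -(pd 1 a0 x) := funext e01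
  have F10 : pd 1 a0 = fun x => -(pd 0 a1 x) := funext fun x => by rw [e01 x]; ring
  have F02 : pd 0 a2 = fun x => -(pd 2 a0 x) := funext e02
  have F20 : pd 2 a0 = fun x => -(pd 0 a2 x) := funext fun x => by rw [e02 x]; ring
  have F12 : pd 1 a2 = fun x => -(pd 2 a1 x) := funext e12
  have F21 : pd 2 a1 = fun x => -(pd 1 a2 x) := funext fun x => by rw [e12 x]; ring
  have G1 : pd 1 a1 = pd 0 a0 := funext fun x => (d01 x).symm
  have G2 : pd 2 a2 = pd 0 a0 := funext fun x => by rw [← d12 x, ← d01 x]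
  -- all-distinct second derivatives vanish
  have T012 : pd 0 (pd 1 a2) = fun _ => 0 := by
    funext x
    have h1 : pd 0 (pd 1 a2) x = -(pd 0 (pd 1 a2) x) := by
      conv_lhs =>
        rw [F12, st7_pdNv, st7_pdC s1 0 2, F01, st7_pdNv, st7_pdC s0 2 1, F20,
          st7_pdNv, st7_pdC s2 1 0]
      ring
    linarith
  have T021 : pd 0 (pd 2 a1) = fun _ => 0 := by
    rw [F21]; funext x
    rw [st7_pdNv, congrFun T012 x]; simp
  have T120 : pd 1 (pd 2 a0) = fun _ => 0 := by
    rw [F20]; funext x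
    rw [st7_pdNv, st7_pdC s2 1 0, congrFun T012 x]; simp
  -- Hessian of l := pd 0 a0 vanishes
  have sl : ContDiff ℝ (⊤ : ℕ∞) (pd 0 a0) := st7_pdc s0 0
  have H01 : pd 0 (pd 1 (pd 0 a0)) = fun _ => 0 := by
    rw [← G2, st7_pdC s2 1 2, st7_pdC (st7_pdc s2 1) 0 2, T012, st7_pdZ]
  have H02 : pd 0 (pd 2 (pd 0 a0)) = fun _ => 0 := by
    rw [← G1, st7_pdC s1 2 1, st7_pdC (st7_pdc s1 2) 0 1, T021, st7_pdZ]
  have H12 : pd 1 (pd 2 (pd 0 a0)) = fun _ => 0 := by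
    rw [st7_pdC s0 2 0, st7_pdC (st7_pdc s0 2) 1 0, T120, st7_pdZ]
  -- pure second derivatives of l
  have Q01 : ∀ x, pd 0 (pd 0 (pd 0 a0)) x = -(pd 1 (pd 1 (pd 0 a0)) x) := by
    intro x
    conv_lhs =>
      rw [← G1, st7_pdC s1 0 1, F01, st7_pdN 1 (pd 1 a0), st7_pdNv,
        st7_pdC (st7_pdc s0 1) 0 1, st7_pdC s0 0 1]
  have Q12 : ∀ x, pd 1 (pd 1 (pd 0 a0)) x = -(pd 2 (pd 2 (pd 0 a0)) x) := by
    intro x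
    conv_lhs =>
      rw [← G2, st7_pdC s2 1 2, F12, st7_pdN 2 (pd 2 a1), st7_pdNv,
        st7_pdC (st7_pdc s1 2) 1 2, st7_pdC s1 1 2, G1]
  have Q20 : ∀ x, pd 2 (pd 2 (pd 0 a0)) x = -(pd 0 (pd 0 (pd 0 a0)) x) := by
    intro x
    conv_lhs =>
      rw [st7_pdC s0 2 0, F20, st7_pdN 0 (pd 0 a2), st7_pdNv,
        st7_pdC (st7_pdc s2 0) 2 0, st7_pdC s2 2 0, G2]
  have Q0 : ∀ x, pd 0 (pd 0 (pd 0 a0)) x = 0 := by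
    intro x; have h1 := Q01 x; have h2 := Q12 x; have h3 := Q20 x; linarith
  have Q1 : ∀ x, pd 1 (pd 1 (pd 0 a0)) x = 0 := by
    intro x; have h1 := Q01 x; have h2 := Q0 x; linarith
  have Q2 : ∀ x, pd 2 (pd 2 (pd 0 a0)) x = 0 := by
    intro x; have h1 := Q12 x; have h2 := Q1 x; linarith
  -- gradient of l is constant hence zero
  have cl : HasCompactSupport (pd 0 a0) := st7_pdh c0 0
  have gl : ∀ j : Fin 3, pd j (pd 0 a0) = fun _ => 0 := by
    intro j
    apply st7_ez (st7_pdc sl j) (st7_pdh cl j)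
    intro k x
    fin_cases j <;> fin_cases k
    · show pd 0 (pd 0 (pd 0 a0)) x = 0; exact Q0 x
    · show pd 1 (pd 0 (pd 0 a0)) x = 0
      exact congrFun ((st7_pdC sl 1 0).trans H01) x
    · show pd 2 (pd 0 (pd 0 a0)) x = 0
      exact congrFun ((st7_pdC sl 2 0).trans H02) x
    · show pd 0 (pd 1 (pd 0 a0)) x = 0; exact congrFun H01 x
    · show pd 1 (pd 1 (pd 0 a0)) x = 0; exact Q1 x
    · show pd 2 (pd 1 (pd 0 a0)) x = 0
      exact congrFun ((st7_pdC sl 2 1).trans H12) x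
    · show pd 0 (pd 2 (pd 0 a0)) x = 0; exact congrFun H02 x
    · show pd 1 (pd 2 (pd 0 a0)) x = 0; exact congrFun H12 x
    · show pd 2 (pd 2 (pd 0 a0)) x = 0; exact Q2 x
  have lz : pd 0 a0 = fun _ => 0 :=
    st7_ez sl cl (fun k x => congrFun (gl k) x)
  have D00 : pd 0 a0 = fun _ => 0 := lz
  have D11 : pd 1 a1 = fun _ => 0 := by rw [G1]; exact lz
  have D22 : pd 2 a2 = fun _ => 0 := by rw [G2]; exact lz
  -- off-diagonal first derivatives vanish
  have z10 : pd 1 a0 = fun _ => 0 := by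
    apply st7_ez (st7_pdc s0 1) (st7_pdh c0 1)
    intro k x
    fin_cases k
    · show pd 0 (pd 1 a0) x = 0
      exact congrFun ((st7_pdC s0 0 1).trans (gl 1)) x
    · show pd 1 (pd 1 a0) x = 0
      have h : pd 1 (pd 1 a0) = fun y => -(pd 0 (pd 1 a1) y) := by
        rw [F10]; funext y; rw [st7_pdNv, st7_pdC s1 1 0]
      have h2 : pd 0 (pd 1 a1) = fun _ => 0 := by rw [G1]; exact gl 0
      rw [congrFun h x, congrFun h2 x]; simp
    · show pd 2 (pd 1 a0) x = 0
      exact congrFun ((st7_pdC s0 2 1).trans T120) x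
  have z20 : pd 2 a0 = fun _ => 0 := by
    apply st7_ez (st7_pdc s0 2) (st7_pdh c0 2)
    intro k x
    fin_cases k
    · show pd 0 (pd 2 a0) x = 0
      exact congrFun ((st7_pdC s0 0 2).trans (gl 2)) x
    · show pd 1 (pd 2 a0) x = 0
      exact congrFun T120 x
    · show pd 2 (pd 2 a0) x = 0
      have h : pd 2 (pd 2 a0) = fun y => -(pd 0 (pd 2 a2) y) := by
        rw [F20]; funext y; rw [st7_pdNv, st7_pdC s2 2 0]
      have h2 : pd 0 (pd 2 a2) = fun _ => 0 := by rw [G2]; exact gl 0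
      rw [congrFun h x, congrFun h2 x]; simp
  have z21 : pd 2 a1 = fun _ => 0 := by
    apply st7_ez (st7_pdc s1 2) (st7_pdh c1 2)
    intro k x
    fin_cases k
    · show pd 0 (pd 2 a1) x = 0
      exact congrFun T021 x
    · show pd 1 (pd 2 a1) x = 0
      have h2 : pd 2 (pd 1 a1) = fun _ => 0 := by rw [G1]; exact gl 2
      exact congrFun ((st7_pdC s1 1 2).trans h2) x
    · show pd 2 (pd 2 a1) x = 0
      have h : pd 2 (pd 2 a1) = fun y => -(pd 1 (pd 2 a2) y) := by
        rw [F21]; funext y; rw [st7_pdNv, st7_pdC s2 2 1]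
      have h2 : pd 1 (pd 2 a2) = fun _ => 0 := by rw [G2]; exact gl 1
      rw [congrFun h x, congrFun h2 x]; simp
  have z01 : pd 0 a1 = fun _ => 0 := by rw [F01, z10]; funext x; simp
  have z02 : pd 0 a2 = fun _ => 0 := by rw [F02, z20]; funext x; simp
  have z12 : pd 1 a2 = fun _ => 0 := by rw [F12, z21]; funext x; simp
  have za0 : a0 = fun _ => 0 := by
    apply st7_ez s0 c0
    intro k x
    fin_cases k
    · show pd 0 a0 x = 0; exact congrFun D00 x
    · show pd 1 a0 x = 0; exact congrFun z10 x
    · show pd 2 a0 x = 0; exact congrFun z20 x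
  have za1 : a1 = fun _ => 0 := by
    apply st7_ez s1 c1
    intro k x
    fin_cases k
    · show pd 0 a1 x = 0; exact congrFun z01 x
    · show pd 1 a1 x = 0; exact congrFun D11 x
    · show pd 2 a1 x = 0; exact congrFun z21 x
  have za2 : a2 = fun _ => 0 := by
    apply st7_ez s2 c2
    intro k x
    fin_cases k
    · show pd 0 a2 x = 0; exact congrFun z02 x
    · show pd 1 a2 x = 0; exact congrFun z12 x
    · show pd 2 a2 x = 0; exact congrFun D22 x
  exact ⟨fun x => congrFun za0 x, fun x => congrFun za1 x, fun x => congrFun za2 x⟩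

/-- if P : ℝ³ → ℝ^{3×3} is C∞ with compact support contained in
an open set Ω, sym P ≡ 0 and dev sym(Curl P) ≡ 0, then P ≡ 0. -/

theorem stmt7 (Ω : Set V3) (hΩ : IsOpen Ω) (P : V3 → M3)
    (hP : ContDiff ℝ (⊤ : ℕ∞) P) (hsupp : HasCompactSupport P) (hsub : tsupport P ⊆ Ω)
    (hsym : ∀ x, sym3 (P x) = 0)
    (hcurl : ∀ x, dev3 (sym3 (Curl3 P x)) = 0) :
    P = 0 := by
  have hanti : ∀ (x : V3) (i j : Fin 3), P x i j = -(P x j i) := by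
    intro x i j
    have h := congrFun (congrFun (hsym x) i) j
    simp [sym3] at h
    linarith
  have h00F : (fun y => P y 0 0) = (fun _ : V3 => (0:ℝ)) :=
    funext fun y => by have := hanti y 0 0; linarith
  have h11F : (fun y => P y 1 1) = (fun _ : V3 => (0:ℝ)) :=
    funext fun y => by have := hanti y 1 1; linarith
  have h22F : (fun y => P y 2 2) = (fun _ : V3 => (0:ℝ)) :=
    funext fun y => by have := hanti y 2 2; linarith
  have h01F : (fun y => P y 0 1) = (fun y => -(P y 1 0)) := funext fun y => hanti y 0 1
  have h12F : (fun y => P y 1 2) = (fun y => -(P y 2 1)) := funext fun y => hanti y 1 2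
  have h20F : (fun y => P y 2 0) = (fun y => -(P y 0 2)) := funext fun y => hanti y 2 0
  have scomp : ∀ i j : Fin 3, ContDiff ℝ (⊤ : ℕ∞) (fun y => P y i j) := by
    intro i j
    exact (LinearMap.toContinuousLinearMap
      ({ toFun := fun X : M3 => X i j, map_add' := fun _ _ => rfl,
         map_smul' := fun _ _ => rfl } : M3 →ₗ[ℝ] ℝ)).contDiff.comp hP
  have ccomp : ∀ i j : Fin 3, HasCompactSupport (fun y => P y i j) := by
    intro i j
    exact hsupp.comp_left (g := fun X : M3 => X i j) rfl
  -- the five scalar PDEs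
  have e01 : ∀ x, pd 0 (fun y => P y 0 2) x = -(pd 1 (fun y => P y 2 1) x) := by
    intro x
    have h := congrFun (congrFun (hcurl x) 0) 1
    simp [dev3, sym3, Curl3, Matrix.trace, Matrix.diag, Fin.sum_univ_three] at h
    rw [h00F, h11F, h12F] at h
    simp only [st7_pdNv, st7_pdZv] at h
    linarith
  have e02 : ∀ x, pd 0 (fun y => P y 1 0) x = -(pd 2 (fun y => P y 2 1) x) := by
    intro x
    have h := congrFun (congrFun (hcurl x) 0) 2
    simp [dev3, sym3, Curl3, Matrix.trace, Matrix.diag, Fin.sum_univ_three] at h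
    rw [h00F, h22F, h01F] at h
    simp only [st7_pdNv, st7_pdZv] at h
    linarith
  have e12 : ∀ x, pd 1 (fun y => P y 1 0) x = -(pd 2 (fun y => P y 0 2) x) := by
    intro x
    have h := congrFun (congrFun (hcurl x) 1) 2
    simp [dev3, sym3, Curl3, Matrix.trace, Matrix.diag, Fin.sum_univ_three] at h
    rw [h11F, h22F, h20F] at h
    simp only [st7_pdNv, st7_pdZv] at h
    linarith
  have hdiag : ∀ x, pd 0 (fun y => P y 2 1) x = pd 1 (fun y => P y 0 2) x ∧
      pd 1 (fun y => P y 0 2) x = pd 2 (fun y => P y 1 0) x := by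
    intro x
    have h0 := congrFun (congrFun (hcurl x) 0) 0
    have h1 := congrFun (congrFun (hcurl x) 1) 1
    have h2 := congrFun (congrFun (hcurl x) 2) 2
    simp [dev3, sym3, Curl3, Matrix.trace, Matrix.diag, Fin.sum_univ_three] at h0 h1 h2
    rw [h01F, h12F, h20F] at h0 h1 h2
    simp only [st7_pdNv, st7_pdZv] at h0 h1 h2
    constructor <;> linarith
  obtain ⟨za0, za1, za2⟩ := st7_key (fun y => P y 2 1) (fun y => P y 0 2) (fun y => P y 1 0)
    (scomp 2 1) (scomp 0 2) (scomp 1 0) (ccomp 2 1) (ccomp 0 2) (ccomp 1 0)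
    e01 e02 e12 (fun x => (hdiag x).1) (fun x => (hdiag x).2)
  funext x
  ext i j
  fin_cases i <;> fin_cases j
  · show P x 0 0 = 0; have := hanti x 0 0; linarith
  · show P x 0 1 = 0; rw [hanti x 0 1, show P x 1 0 = 0 from za2 x, neg_zero]
  · show P x 0 2 = 0; exact za1 x
  · show P x 1 0 = 0; exact za2 x
  · show P x 1 1 = 0; have := hanti x 1 1; linarith
  · show P x 1 2 = 0; rw [hanti x 1 2, show P x 2 1 = 0 from za0 x, neg_zero]
  · show P x 2 0 = 0; rw [hanti x 2 0, show P x 0 2 = 0 from za1 x, neg_zero]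
  · show P x 2 1 = 0; exact za0 x
  · show P x 2 2 = 0; have := hanti x 2 2; linarith
end
end

section
/- Let Γ ⊆ ℝ³ be a set such that (i) Γ is not discrete, i.e. there exist a point x̄ ∈ ℝ³ and a sequence of points x_k ∈ Γ \ {x̄} with x_k → x̄; (ii) Γ is not contained in any affine line of ℝ³; (iii) Γ is not contained in any circle of ℝ³. Let A ∈ so(3), b, d ∈ ℝ³, β ∈ ℝ and define f : ℝ³ → ℝ³ by f(x) = A·x + β·x + b + ⟨d,x⟩·x − (1/2)·d·‖x‖². If f(x) = 0 for all x ∈ Γ, then A = 0, b = 0, d = 0 and β = 0. -/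
open Matrix MeasureTheory

noncomputable section

namespace Stmt17Aux

def dt (u v : V3) : ℝ := ∑ i, u i * v i
def cr (u v : V3) : V3 := ![u 1*v 2 - u 2*v 1, u 2*v 0 - u 0*v 2, u 0*v 1 - u 1*v 0]
def G (a d : V3) (β : ℝ) (u : V3) : V3 := cr a u + β • u + dt d u • u - ((1/2) * dt u u) • d

lemma dt_expand (u v : V3) : dt u v = u 0 * v 0 + u 1 * v 1 + u 2 * v 2 := by
  simp [dt, Fin.sum_univ_three]

lemma cr_apply0 (u v : V3) : cr u v 0 = u 1*v 2 - u 2*v 1 := rfl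
lemma cr_apply1 (u v : V3) : cr u v 1 = u 2*v 0 - u 0*v 2 := rfl
lemma cr_apply2 (u v : V3) : cr u v 2 = u 0*v 1 - u 1*v 0 := rfl

lemma transl (a b d xb : V3) (β : ℝ) (x : V3) :
    cr a x + β • x + b + dt d x • x - ((1/2) * dt x x) • d
    = (cr a xb + β • xb + b + dt d xb • xb - ((1/2) * dt xb xb) • d)
      + G (a + cr d xb) d (β + dt d xb) (x - xb) := by
  funext i
  fin_cases i <;>
    simp [G, cr, dt_expand, Pi.add_apply, Pi.sub_apply, Pi.smul_apply, smul_eq_mul,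
      Matrix.vecHead, Matrix.vecTail] <;> ring

lemma keyscal (a d : V3) (β : ℝ) (u : V3) :
    dt u (G a d β u) = β * dt u u + (1/2) * dt d u * dt u u := by
  simp [G, dt_expand, cr, Pi.add_apply, Pi.sub_apply, Pi.smul_apply, smul_eq_mul,
    Matrix.vecHead, Matrix.vecTail]; ring

lemma dt_cr_left (u v : V3) : dt u (cr u v) = 0 := by
  simp [dt_expand, cr_apply0, cr_apply1, cr_apply2]; ring
lemma dt_cr_right (u v : V3) : dt v (cr u v) = 0 := by
  simp [dt_expand, cr_apply0, cr_apply1, cr_apply2]; ring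
lemma trip_neg (u a d : V3) : dt u (cr a d) = - dt d (cr a u) := by
  simp [dt_expand, cr_apply0, cr_apply1, cr_apply2]; ring
lemma cr_norm (u v : V3) : dt (cr u v) (cr u v) = dt u u * dt v v - (dt u v)^2 := by
  simp [dt_expand, cr_apply0, cr_apply1, cr_apply2]; ring
lemma dt_smul_right (s : ℝ) (u v : V3) : dt u (s • v) = s * dt u v := by
  simp [dt_expand, Pi.smul_apply, smul_eq_mul]; ring
lemma dt_quad (u w : V3) (r : ℝ) :
    dt (u + r • w) (u + r • w) = dt u u + 2*r*dt u w + r^2 * dt w w := by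
  simp [dt_expand, Pi.add_apply, Pi.smul_apply, smul_eq_mul]; ring
lemma dt_add_smul (v u w : V3) (r : ℝ) : dt v (u + r • w) = dt v u + r * dt v w := by
  simp [dt_expand, Pi.add_apply, Pi.smul_apply, smul_eq_mul]; ring
lemma dt_zero_left (v : V3) : dt 0 v = 0 := by simp [dt_expand]
lemma dt_zero_right (v : V3) : dt v 0 = 0 := by simp [dt_expand]
lemma cr_zero_left (v : V3) : cr 0 v = 0 := by
  funext i; fin_cases i <;> simp [cr_apply0, cr_apply1, cr_apply2]

lemma dt_zero_imp (u : V3) (h : dt u u = 0) : u = 0 := by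
  rw [dt_expand] at h
  funext i
  fin_cases i
  · show u 0 = 0
    have : u 0 * u 0 = 0 := by nlinarith [mul_self_nonneg (u 0), mul_self_nonneg (u 1), mul_self_nonneg (u 2)]
    exact mul_self_eq_zero.mp this
  · show u 1 = 0
    have : u 1 * u 1 = 0 := by nlinarith [mul_self_nonneg (u 0), mul_self_nonneg (u 1), mul_self_nonneg (u 2)]
    exact mul_self_eq_zero.mp this
  · show u 2 = 0
    have : u 2 * u 2 = 0 := by nlinarith [mul_self_nonneg (u 0), mul_self_nonneg (u 1), mul_self_nonneg (u 2)]
    exact mul_self_eq_zero.mp this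

lemma dt_nonneg (u : V3) : 0 ≤ dt u u := by
  rw [dt_expand]
  nlinarith [mul_self_nonneg (u 0), mul_self_nonneg (u 1), mul_self_nonneg (u 2)]

lemma dt_pos (u : V3) (hu : u ≠ 0) : 0 < dt u u :=
  lt_of_le_of_ne (dt_nonneg u) (fun h => hu (dt_zero_imp u h.symm))

lemma dt_CS (d u : V3) : (dt d u)^2 ≤ dt d d * dt u u := by
  rw [dt_expand, dt_expand, dt_expand]
  nlinarith [sq_nonneg (d 0*u 1 - d 1*u 0), sq_nonneg (d 0*u 2 - d 2*u 0), sq_nonneg (d 1*u 2 - d 2*u 1)]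

lemma mulVec_skew (A : M3) (hA : Aᵀ = -A) (u : V3) :
    A.mulVec u = cr ![A 2 1, A 0 2, A 1 0] u := by
  have hs : ∀ i j, A j i = - A i j := fun i j => by
    have := congrFun (congrFun hA i) j
    simpa [Matrix.transpose_apply] using this
  funext i
  have h00 := hs 0 0; have h11 := hs 1 1; have h22 := hs 2 2
  have h01 := hs 0 1; have h02 := hs 0 2; have h12 := hs 1 2
  fin_cases i <;>
    simp [Matrix.mulVec, dotProduct, Fin.sum_univ_three,
      cr_apply0, cr_apply1, cr_apply2, Matrix.cons_val_zero, Matrix.cons_val_one,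
      Matrix.head_cons]
  · linear_combination (u 0/2) * h00 + u 1 * h01
  · linear_combination (u 1/2) * h11 + u 2 * h12
  · linear_combination u 0 * h02 + (u 2/2) * h22

lemma parallel (a u : V3) (ha : a ≠ 0) (h : cr a u = 0) : ∃ t : ℝ, u = t • a := by
  have h0 := congrFun h 0; have h1 := congrFun h 1; have h2 := congrFun h 2
  rw [cr_apply0] at h0; rw [cr_apply1] at h1; rw [cr_apply2] at h2
  simp only [Pi.zero_apply] at h0 h1 h2
  have hex : ∃ i, a i ≠ 0 := by by_contra hh; push_neg at hh; exact ha (funext hh)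
  obtain ⟨i, hi⟩ := hex
  fin_cases i
  · have hi' : a 0 ≠ 0 := hi
    refine ⟨u 0 / a 0, funext fun j => ?_⟩
    fin_cases j
    · show u 0 = u 0 / a 0 * a 0
      field_simp
    · show u 1 = u 0 / a 0 * a 1
      rw [eq_comm, div_mul_eq_mul_div, div_eq_iff hi']; linear_combination -h2
    · show u 2 = u 0 / a 0 * a 2
      rw [eq_comm, div_mul_eq_mul_div, div_eq_iff hi']; linear_combination h1
  · have hi' : a 1 ≠ 0 := hi
    refine ⟨u 1 / a 1, funext fun j => ?_⟩
    fin_cases j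
    · show u 0 = u 1 / a 1 * a 0
      rw [eq_comm, div_mul_eq_mul_div, div_eq_iff hi']; linear_combination h2
    · show u 1 = u 1 / a 1 * a 1
      field_simp
    · show u 2 = u 1 / a 1 * a 2
      rw [eq_comm, div_mul_eq_mul_div, div_eq_iff hi']; linear_combination -h0
  · have hi' : a 2 ≠ 0 := hi
    refine ⟨u 2 / a 2, funext fun j => ?_⟩
    fin_cases j
    · show u 0 = u 2 / a 2 * a 0
      rw [eq_comm, div_mul_eq_mul_div, div_eq_iff hi']; linear_combination -h1
    · show u 1 = u 2 / a 2 * a 1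
      rw [eq_comm, div_mul_eq_mul_div, div_eq_iff hi']; linear_combination h0
    · show u 2 = u 2 / a 2 * a 2
      field_simp

end Stmt17Aux

open Stmt17Aux

/-- if Γ ⊆ ℝ³ is not discrete, not contained in an affine line,
and not contained in a circle, and if
f(x) = A·x + β·x + b + ⟨d,x⟩·x − (1/2)·d·‖x‖² vanishes on Γ (A ∈ so(3)),
then A = 0, b = 0, d = 0 and β = 0. -/
theorem stmt17 (Γ : Set V3)
    (h1 : ∃ xbar : V3, xbar ∈ closure (Γ \ {xbar}))
    (h2 : ¬ ∃ pt v : V3, Γ ⊆ {x : V3 | ∃ t : ℝ, x = pt + t • v})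
    (h3 : ¬ ∃ (cc nn : V3) (ρ : ℝ), 0 < ρ ∧ nn ≠ 0 ∧
        Γ ⊆ {x : V3 | (∑ i, (x i - cc i)^2) = ρ^2 ∧ (∑ i, nn i * (x i - cc i)) = 0})
    (A : M3) (hA : Aᵀ = -A) (b d : V3) (β : ℝ)
    (hf : ∀ x ∈ Γ,
      A.mulVec x + β • x + b + (∑ i, d i * x i) • x - ((1/2) * ∑ i, (x i)^2) • d = 0) :
    A = 0 ∧ b = 0 ∧ d = 0 ∧ β = 0 := by
  obtain ⟨xb, hxb⟩ := h1
  have hsum : ∀ z : V3, ((1/2 : ℝ) * ∑ i, (z i)^2) = ((1/2) * dt z z) := fun z => by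
    simp [dt, sq]
  -- continuity and f(xb) = 0
  have hcont : Continuous (fun x : V3 => A.mulVec x + β • x + b + (∑ i, d i * x i) • x - ((1/2) * ∑ i, (x i)^2) • d) := by
    apply Continuous.sub
    · apply Continuous.add
      apply Continuous.add
      apply Continuous.add
      · exact (Matrix.mulVecLin A).continuous_of_finiteDimensional
      · exact continuous_id.const_smul β
      · exact continuous_const
      · exact (continuous_finset_sum Finset.univ fun i _ => continuous_const.mul (continuous_apply i)).smul continuous_id
    · exact (continuous_const.mul (continuous_finset_sum Finset.univ fun i _ => (continuous_apply i).pow 2)).smul continuous_const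
  have hxbcl : xb ∈ closure Γ := closure_mono Set.diff_subset hxb
  have hfxb : A.mulVec xb + β • xb + b + (∑ i, d i * xb i) • xb - ((1/2) * ∑ i, (xb i)^2) • d = 0 := by
    have hEq : Set.EqOn (fun x : V3 => A.mulVec x + β • x + b + (∑ i, d i * x i) • x - ((1/2) * ∑ i, (x i)^2) • d) (fun _ => (0:V3)) Γ := fun y hy => hf y hy
    exact (hEq.closure hcont continuous_const) hxbcl
  -- restated with cr/dt
  have hfy : ∀ y ∈ Γ,
      cr ![A 2 1, A 0 2, A 1 0] y + β • y + b + dt d y • y - ((1/2) * dt y y) • d = 0 := by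
    intro y hy
    have h' := hf y hy
    rw [mulVec_skew A hA, hsum y] at h'
    exact h'
  have hfxb' : cr ![A 2 1, A 0 2, A 1 0] xb + β • xb + b + dt d xb • xb - ((1/2) * dt xb xb) • d = 0 := by
    have h' := hfxb
    rw [mulVec_skew A hA, hsum xb] at h'
    exact h'
  set a : V3 := ![A 2 1, A 0 2, A 1 0] + cr d xb with haeq
  set B : ℝ := β + dt d xb with hBeq
  have hG : ∀ y ∈ Γ, G a d B (y - xb) = 0 := by
    intro y hy
    have ht := transl ![A 2 1, A 0 2, A 1 0] b d xb β y
    rw [hfy y hy, hfxb', ← haeq, ← hBeq] at ht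
    simpa using ht.symm
  -- small nonzero points
  have small : ∀ δ : ℝ, 0 < δ → ∃ u : V3, u ≠ 0 ∧ G a d B u = 0 ∧ dt u u < δ := by
    intro δ hδ
    have hε : 0 < Real.sqrt (δ/3) := Real.sqrt_pos.mpr (by linarith)
    obtain ⟨y, hyΓ, hdist⟩ := Metric.mem_closure_iff.mp hxb _ hε
    have hyne : y ≠ xb := fun h => hyΓ.2 (by simp [h])
    refine ⟨y - xb, sub_ne_zero.mpr hyne, hG y hyΓ.1, ?_⟩
    have hd2 : (dist xb y)^2 < δ/3 := by
      nlinarith [Real.sq_sqrt (show (0:ℝ) ≤ δ/3 by linarith), dist_nonneg (x := xb) (y := y)]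
    have hb : ∀ i : Fin 3, (xb i - y i)^2 ≤ (dist xb y)^2 := by
      intro i
      have hi := dist_le_pi_dist xb y i
      rw [Real.dist_eq] at hi
      nlinarith [abs_nonneg (xb i - y i), sq_abs (xb i - y i)]
    have e : dt (y - xb) (y - xb) = (xb 0 - y 0)^2 + (xb 1 - y 1)^2 + (xb 2 - y 2)^2 := by
      simp [dt_expand, Pi.sub_apply]; ring
    have b0 := hb 0; have b1 := hb 1; have b2 := hb 2
    rw [e]; linarith
  -- B = 0
  have hB : B = 0 := by
    by_contra hB0
    have key : ∀ u : V3, u ≠ 0 → G a d B u = 0 → dt d u = -2*B := by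
      intro u hu hGu
      have hk := keyscal a d B u
      rw [hGu, dt_zero_right] at hk
      have hQ := dt_pos u hu
      have h' : (B + (1/2) * dt d u) * dt u u = 0 := by linear_combination -hk
      rcases mul_eq_zero.mp h' with h | h
      · linarith
      · exact absurd h (ne_of_gt hQ)
    obtain ⟨u0, hu0, hGu0, _⟩ := small 1 one_pos
    have hdu0 := key u0 hu0 hGu0
    have hd : d ≠ 0 := by
      intro h
      rw [h, dt_zero_left] at hdu0
      exact hB0 (by linarith)
    have hdd := dt_pos d hd
    obtain ⟨u, hu, hGu, hsm⟩ := small (4*B^2/dt d d) (by positivity)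
    have hdu := key u hu hGu
    have hcs := dt_CS d u
    rw [hdu] at hcs
    have hlt : dt d d * dt u u < dt d d * (4*B^2/dt d d) := mul_lt_mul_of_pos_left hsm hdd
    have heq : dt d d * (4*B^2/dt d d) = 4*B^2 := by field_simp
    have h4 : (4:ℝ)*B^2 ≤ dt d d * dt u u := by nlinarith [hcs]
    have hlt2 : dt d d * dt u u < 4*B^2 := heq ▸ hlt
    linarith
  -- perpendicularity and cross equation
  have hperp : ∀ u : V3, u ≠ 0 → G a d B u = 0 → dt d u = 0 := by
    intro u hu hGu
    have hk := keyscal a d B u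
    rw [hGu, dt_zero_right, hB] at hk
    have hQ := dt_pos u hu
    have h' : dt d u * dt u u = 0 := by linarith
    exact (mul_eq_zero.mp h').resolve_right (ne_of_gt hQ)
  have hcru : ∀ u : V3, u ≠ 0 → G a d B u = 0 → cr a u = ((1/2) * dt u u) • d := by
    intro u hu hGu
    have hGu' : cr a u + B • u + dt d u • u - ((1/2) * dt u u) • d = 0 := hGu
    rw [hB, hperp u hu hGu] at hGu'
    simp only [zero_smul, add_zero] at hGu'
    exact sub_eq_zero.mp hGu'
  -- main case split
  rcases eq_or_ne d 0 with hd | hd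
  · -- d = 0
    have hdt0 : dt d xb = 0 := by rw [hd, dt_zero_left]
    have hβ : β = 0 := by
      have : β + dt d xb = 0 := hB
      linarith
    rcases eq_or_ne a 0 with haz | haz
    · -- all zero
      have hAa : ∀ i : Fin 3, (![A 2 1, A 0 2, A 1 0] : V3) i = 0 := by
        intro i
        have hcz : cr d xb = 0 := by rw [hd]; exact cr_zero_left xb
        have := congrFun haz.symm i
        rw [haeq, hcz] at this
        simpa using this.symm
      have e21 : A 2 1 = 0 := hAa 0
      have e02 : A 0 2 = 0 := hAa 1
      have e10 : A 1 0 = 0 := hAa 2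
      have hs : ∀ i j, A j i = - A i j := fun i j => by
        have := congrFun (congrFun hA i) j
        simpa [Matrix.transpose_apply] using this
      have hA0 : A = 0 := by
        ext i j
        fin_cases i <;> fin_cases j <;> simp [Matrix.zero_apply] <;>
          linarith [hs 0 0, hs 1 1, hs 2 2, hs 0 1, hs 0 2, hs 1 2, e21, e02, e10]
      have hb0 : b = 0 := by
        have h' := hfxb
        rw [hA0, hd, hβ] at h'
        simpa using h'
      exact ⟨hA0, hb0, hd, hβ⟩
    · -- line case: contradiction with h2
      exfalso
      apply h2
      refine ⟨xb, a, fun y hy => ?_⟩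
      have hGy : cr a (y - xb) + B • (y - xb) + dt d (y - xb) • (y - xb)
          - ((1/2) * dt (y - xb) (y - xb)) • d = 0 := hG y hy
      rw [hB, hd, dt_zero_left] at hGy
      simp only [zero_smul, add_zero, smul_zero, sub_zero] at hGy
      obtain ⟨t, ht⟩ := parallel a (y - xb) haz hGy
      exact ⟨t, by rw [← ht]; abel⟩
  · -- d ≠ 0 : circle case
    have hdd := dt_pos d hd
    obtain ⟨u0, hu0, hGu0, _⟩ := small 1 one_pos
    have hQ0 := dt_pos u0 hu0
    have hc0 := hcru u0 hu0 hGu0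
    have had : dt a d = 0 := by
      have h1 : dt a (cr a u0) = 0 := dt_cr_left a u0
      rw [hc0, dt_smul_right] at h1
      rcases mul_eq_zero.mp h1 with h | h
      · exfalso; nlinarith
      · exact h
    rcases eq_or_ne a 0 with haz | haz
    · exfalso
      rw [haz, cr_zero_left] at hc0
      have hpos : (0:ℝ) < (1/2) * dt u0 u0 := by linarith
      exact hd ((smul_eq_zero.mp hc0.symm).resolve_left (ne_of_gt hpos))
    · exfalso
      apply h3
      set r : ℝ := 1 / dt d d with hr
      set w : V3 := cr a d with hw
      have hww : dt w w = dt a a * dt d d := by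
        rw [hw, cr_norm, had]; ring
      have hdw : dt d w = 0 := by rw [hw]; exact dt_cr_right a d
      have hρpos : 0 < dt a a / dt d d := div_pos (dt_pos a haz) hdd
      refine ⟨xb - r • w, d, Real.sqrt (dt a a / dt d d), Real.sqrt_pos.mpr hρpos, hd, ?_⟩
      intro y hy
      have hρ : Real.sqrt (dt a a / dt d d) ^ 2 = dt a a / dt d d := Real.sq_sqrt (le_of_lt hρpos)
      have hsum1 : (∑ i, (y i - (xb - r • w) i)^2) = dt ((y - xb) + r • w) ((y - xb) + r • w) := by
        rw [dt_expand]
        simp [Fin.sum_univ_three, Pi.add_apply, Pi.sub_apply, Pi.smul_apply, smul_eq_mul]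
        ring
      have hsum2 : (∑ i, d i * (y i - (xb - r • w) i)) = dt d ((y - xb) + r • w) := by
        rw [dt_expand]
        simp [Fin.sum_univ_three, Pi.add_apply, Pi.sub_apply, Pi.smul_apply, smul_eq_mul]
        ring
      rcases eq_or_ne (y - xb) 0 with h0 | h0
      · constructor
        · rw [hsum1, h0, dt_quad, dt_zero_left, dt_zero_left, hρ, hww, hr]
          field_simp [hdd.ne']
          ring
        · rw [hsum2, h0, dt_add_smul, dt_zero_right, hdw]
          ring
      · have hp := hperp (y - xb) h0 (hG y hy)
        have hc := hcru (y - xb) h0 (hG y hy)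
        have huw : dt (y - xb) w = -(1/2) * dt (y - xb) (y - xb) * dt d d := by
          have ht := trip_neg (y - xb) a d
          rw [hc, dt_smul_right] at ht
          rw [hw, ht]
          ring
        constructor
        · rw [hsum1, dt_quad, hρ, hww, huw, hr]
          field_simp [hdd.ne']
          ring
        · rw [hsum2, dt_add_smul, hp, hdw]
          ring
end
end

section
/- Let ν ∈ ℝ³ be a unit vector and P ∈ ℝ^{3×3}. Then sym(P × ν) = 0 if and only if there exists α ∈ ℝ such that P × ν = α·Anti(ν); equivalently, if and only if (P − α·𝟙) × ν = 0 for some α ∈ ℝ. -/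
open Matrix MeasureTheory

noncomputable section

lemma stmt18_aux (ν : V3) (hν : ∑ i, (ν i)^2 = 1) (P : M3) :
    (sym3 (P * Anti3 ν) = 0 ↔ ∃ α : ℝ, P * Anti3 ν = α • Anti3 ν) := by
  set X := P * Anti3 ν with hX
  constructor
  · intro h
    have hS : X + Xᵀ = 0 := by
      have h2 : ((1:ℝ)/2) • (X + Xᵀ) = 0 := h
      have := smul_eq_zero.mp h2
      simpa using this
    have hs : ∀ i j, X i j + X j i = 0 := by
      intro i j
      have := congrFun (congrFun hS i) j
      simpa [Matrix.add_apply, Matrix.transpose_apply] using this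
    have hv : ∀ i : Fin 3, X i 0 * ν 0 + X i 1 * ν 1 + X i 2 * ν 2 = 0 := by
      intro i
      have h0 : Anti3 ν 0 0 = 0 := rfl
      have h1 : Anti3 ν 1 0 = ν 2 := rfl
      have h2 : Anti3 ν 2 0 = -ν 1 := rfl
      have h3 : Anti3 ν 0 1 = -ν 2 := rfl
      have h4 : Anti3 ν 1 1 = 0 := rfl
      have h5 : Anti3 ν 2 1 = ν 0 := rfl
      have h6 : Anti3 ν 0 2 = ν 1 := rfl
      have h7 : Anti3 ν 1 2 = -ν 0 := rfl
      have h8 : Anti3 ν 2 2 = 0 := rfl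
      simp only [hX, Matrix.mul_apply, Fin.sum_univ_three, h0, h1, h2, h3, h4, h5, h6, h7, h8]
      ring
    have hn : ν 0 ^ 2 + ν 1 ^ 2 + ν 2 ^ 2 = 1 := by
      simpa [Fin.sum_univ_three] using hν
    have e00 : X 0 0 = 0 := by have := hs 0 0; linarith
    have e11 : X 1 1 = 0 := by have := hs 1 1; linarith
    have e22 : X 2 2 = 0 := by have := hs 2 2; linarith
    have e01 : X 0 1 = -X 1 0 := by have := hs 0 1; linarith
    have e20 : X 2 0 = -X 0 2 := by have := hs 0 2; linarith
    have e12 : X 1 2 = -X 2 1 := by have := hs 1 2; linarith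
    have R0 : -X 1 0 * ν 1 + X 0 2 * ν 2 = 0 := by
      have := hv 0; rw [e00, e01] at this; linarith
    have R1 : X 1 0 * ν 0 - X 2 1 * ν 2 = 0 := by
      have := hv 1; rw [e11, e12] at this; linarith
    have R2 : -X 0 2 * ν 0 + X 2 1 * ν 1 = 0 := by
      have := hv 2; rw [e22, e20] at this; linarith
    refine ⟨ν 0 * X 2 1 + ν 1 * X 0 2 + ν 2 * X 1 0, ?_⟩
    have ha : X 2 1 = (ν 0 * X 2 1 + ν 1 * X 0 2 + ν 2 * X 1 0) * ν 0 := by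
      linear_combination (-X 2 1) * hn + ν 1 * R2 - ν 2 * R1
    have hb : X 0 2 = (ν 0 * X 2 1 + ν 1 * X 0 2 + ν 2 * X 1 0) * ν 1 := by
      linear_combination (-X 0 2) * hn - ν 0 * R2 + ν 2 * R0
    have hc : X 1 0 = (ν 0 * X 2 1 + ν 1 * X 0 2 + ν 2 * X 1 0) * ν 2 := by
      linear_combination (-X 1 0) * hn + ν 0 * R1 - ν 1 * R0
    refine Matrix.ext fun i j => ?_
    fin_cases i <;> fin_cases j
    · show X 0 0 = (ν 0 * X 2 1 + ν 1 * X 0 2 + ν 2 * X 1 0) * 0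
      rw [e00]; ring
    · show X 0 1 = (ν 0 * X 2 1 + ν 1 * X 0 2 + ν 2 * X 1 0) * (-ν 2)
      rw [e01]; linarith [hc]
    · show X 0 2 = (ν 0 * X 2 1 + ν 1 * X 0 2 + ν 2 * X 1 0) * ν 1
      exact hb
    · show X 1 0 = (ν 0 * X 2 1 + ν 1 * X 0 2 + ν 2 * X 1 0) * ν 2
      exact hc
    · show X 1 1 = (ν 0 * X 2 1 + ν 1 * X 0 2 + ν 2 * X 1 0) * 0
      rw [e11]; ring
    · show X 1 2 = (ν 0 * X 2 1 + ν 1 * X 0 2 + ν 2 * X 1 0) * (-ν 0)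
      rw [e12]; linarith [ha]
    · show X 2 0 = (ν 0 * X 2 1 + ν 1 * X 0 2 + ν 2 * X 1 0) * (-ν 1)
      rw [e20]; linarith [hb]
    · show X 2 1 = (ν 0 * X 2 1 + ν 1 * X 0 2 + ν 2 * X 1 0) * ν 0
      exact ha
    · show X 2 2 = (ν 0 * X 2 1 + ν 1 * X 0 2 + ν 2 * X 1 0) * 0
      rw [e22]; ring
  · rintro ⟨α, hα⟩
    have hT : (Anti3 ν)ᵀ = -Anti3 ν := by
      refine Matrix.ext fun i j => ?_
      fin_cases i <;> fin_cases j <;>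
        simp [Anti3, Matrix.transpose_apply, Matrix.neg_apply]
    rw [hα]
    have hz : (α • Anti3 ν) + (α • Anti3 ν)ᵀ = 0 := by
      rw [Matrix.transpose_smul, hT]
      simp
    show (1/2:ℝ) • (α • Anti3 ν + (α • Anti3 ν)ᵀ) = 0
    rw [hz, smul_zero]

/-- for a unit vector ν ∈ ℝ³ and P ∈ ℝ^{3×3},
sym(P × ν) = 0 iff P × ν = α·Anti(ν) for some α ∈ ℝ, equivalently iff
(P − α·𝟙) × ν = 0 for some α ∈ ℝ. -/
theorem stmt18 (ν : V3) (hν : ∑ i, (ν i)^2 = 1) (P : M3) :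
    (sym3 (P * Anti3 ν) = 0 ↔ ∃ α : ℝ, P * Anti3 ν = α • Anti3 ν) ∧
    (sym3 (P * Anti3 ν) = 0 ↔ ∃ α : ℝ, (P - α • (1 : M3)) * Anti3 ν = 0) := by
  have key := stmt18_aux ν hν P
  refine ⟨key, key.trans ⟨?_, ?_⟩⟩
  · rintro ⟨α, hα⟩
    exact ⟨α, by rw [Matrix.sub_mul, Matrix.smul_mul, one_mul, hα, sub_self]⟩
  · rintro ⟨α, hα⟩
    rw [Matrix.sub_mul, Matrix.smul_mul, one_mul, sub_eq_zero] at hα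
    exact ⟨α, hα⟩
end
end
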